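/- Let s, k, t be natural numbers and let X ≥ 1 be real. If J_{s,k}(X) > t·J_{s,k+1}(X), then there exist positive integers x_{il} (1 ≤ i ≤ s, 1 ≤ l ≤ t) with x_{il} ≤ X such that Σ_{i=1}^s x_{i1}^j = Σ_{i=1}^s x_{i2}^j = ... = Σ_{i=1}^s x_{it}^j for every j with 1 ≤ j ≤ k, and the sums Σ_{i=1}^s x_{il}^{k+1} (1 ≤ l ≤ t) are pairwise distinct. -/

import Mathlib

/-- `J s k X` is the number of integral solutions of the system
`x₁^j + ... + x_s^j = y₁^j + ... + y_s^j` for `1 ≤ j ≤ k`, with `1 ≤ xᵢ, yᵢ ≤ X`. -/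
noncomputable def J (s k : ℕ) (X : ℝ) : ℕ :=
  Nat.card {xy : (Fin s → ℤ) × (Fin s → ℤ) //
    (∀ i, 1 ≤ xy.1 i ∧ (xy.1 i : ℝ) ≤ X) ∧
    (∀ i, 1 ≤ xy.2 i ∧ (xy.2 i : ℝ) ≤ X) ∧
    (∀ j ∈ Finset.Icc 1 k, ∑ i, xy.1 i ^ j = ∑ i, xy.2 i ^ j)}

/-!
Sort the points of the box `[1, X]^s` by their first `k` power sums. Then `J_{s,k}(X)` is the
sum of the squares of the fibre sizes, while `J_{s,k+1}(X)` counts the pairs in a common fibre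
that also share their `(k+1)`-st power sum. By Cauchy–Schwarz, the square of a fibre's size is at
most the number of distinct `(k+1)`-st power sums on it times its share of `J_{s,k+1}(X)`. So if
every fibre carried at most `t` distinct values we would get `J_{s,k}(X) ≤ t J_{s,k+1}(X)`; hence
some fibre contains `t` points whose `(k+1)`-st power sums are pairwise distinct.
-/

namespace Finset

variable {α β γ : Type*} [DecidableEq β] [DecidableEq γ]

theorem card_filter_prod_eq_sum_fiber (A : Finset α) (f : α → β) (R : α → α → Prop)
    [DecidableRel R] :
    #{p ∈ A ×ˢ A | f p.1 = f p.2 ∧ R p.1 p.2}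
      = ∑ b ∈ A.image f, #{p ∈ {x ∈ A | f x = b} ×ˢ {x ∈ A | f x = b} | R p.1 p.2} := by
  rw [card_eq_sum_card_fiberwise (f := fun p => f p.1) (t := A.image f)]
  · refine sum_congr rfl fun b _ => congrArg card ?_
    ext ⟨x, y⟩
    simp only [mem_filter, mem_product]
    constructor
    · rintro ⟨⟨⟨hx, hy⟩, hxy, hR⟩, rfl⟩
      exact ⟨⟨⟨hx, rfl⟩, hy, hxy.symm⟩, hR⟩
    · rintro ⟨⟨⟨hx, rfl⟩, hy, hxy⟩, hR⟩
      exact ⟨⟨⟨hx, hy⟩, hxy.symm, hR⟩, rfl⟩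
  · intro p hp
    exact mem_image_of_mem f (mem_product.1 (mem_filter.1 hp).1).1

theorem card_filter_prod_eq_sum_sq_card_fiber (A : Finset α) (f : α → β) :
    #{p ∈ A ×ˢ A | f p.1 = f p.2} = ∑ b ∈ A.image f, #{x ∈ A | f x = b} ^ 2 := by
  simpa [sq] using card_filter_prod_eq_sum_fiber A f (fun _ _ => True)

theorem sq_card_le_card_image_mul_card_filter_prod (C : Finset α) (g : α → γ) :
    #C ^ 2 ≤ #(C.image g) * #{p ∈ C ×ˢ C | g p.1 = g p.2} := by
  rw [card_filter_prod_eq_sum_sq_card_fiber, card_eq_sum_card_image g C]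
  exact sq_sum_le_card_mul_sum_sq

theorem card_filter_prod_le_mul_card_filter_prod (A : Finset α) (f : α → β) (g : α → γ)
    (t : ℕ) (H : ∀ x ∈ A, #({y ∈ A | f y = f x}.image g) ≤ t) :
    #{p ∈ A ×ˢ A | f p.1 = f p.2}
      ≤ t * #{p ∈ A ×ˢ A | f p.1 = f p.2 ∧ g p.1 = g p.2} := by
  rw [card_filter_prod_eq_sum_sq_card_fiber,
    card_filter_prod_eq_sum_fiber A f fun x y => g x = g y, mul_sum]
  refine sum_le_sum fun b hb => ?_
  obtain ⟨x, hx, rfl⟩ := mem_image.1 hb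
  exact (sq_card_le_card_image_mul_card_filter_prod _ g).trans
    (Nat.mul_le_mul_right _ (H x hx))

theorem exists_injective_comp_of_le_card_image (C : Finset α) (g : α → γ) {t : ℕ}
    (ht : t ≤ #(C.image g)) :
    ∃ y : Fin t → α, (∀ l, y l ∈ C) ∧ Function.Injective (g ∘ y) := by
  obtain ⟨e⟩ := Function.Embedding.nonempty_of_card_le (α := Fin t) (β := C.image g)
    (by simpa using ht)
  have hpre : ∀ c : C.image g, ∃ x ∈ C, g x = c := fun c => mem_image.1 c.2
  choose y hyC hgy using hpre
  refine ⟨fun l => y (e l), fun l => hyC _, fun l l' h => e.injective (Subtype.ext ?_)⟩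
  simpa [hgy] using h

end Finset

open Finset

def powerSums (k : ℕ) {s : ℕ} (x : Fin s → ℤ) : Icc 1 k → ℤ := fun j => ∑ i, x i ^ (j : ℕ)

theorem powerSums_eq_iff {k s : ℕ} {x y : Fin s → ℤ} :
    powerSums k x = powerSums k y ↔ ∀ j ∈ Icc 1 k, ∑ i, x i ^ j = ∑ i, y i ^ j := by
  simp [powerSums, funext_iff]

theorem powerSums_succ_eq_iff {k s : ℕ} {x y : Fin s → ℤ} :
    powerSums (k + 1) x = powerSums (k + 1) y ↔
      powerSums k x = powerSums k y ∧ ∑ i, x i ^ (k + 1) = ∑ i, y i ^ (k + 1) := by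
  rw [powerSums_eq_iff, powerSums_eq_iff, ← insert_Icc_right_eq_Icc_add_one (by omega),
    forall_mem_insert, and_comm]

noncomputable def intBox (s : ℕ) (X : ℝ) : Finset (Fin s → ℤ) :=
  Fintype.piFinset fun _ => Icc 1 ⌊X⌋

theorem mem_intBox {s : ℕ} {X : ℝ} {x : Fin s → ℤ} :
    x ∈ intBox s X ↔ ∀ i, 1 ≤ x i ∧ (x i : ℝ) ≤ X := by
  simp [intBox, Int.le_floor]

theorem J_eq_card_filter (s m : ℕ) (X : ℝ) :
    J s m X = #{p ∈ intBox s X ×ˢ intBox s X | powerSums m p.1 = powerSums m p.2} := by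
  rw [J, ← Nat.card_eq_finsetCard]
  exact Nat.card_congr <| Equiv.subtypeEquivRight fun p => by
    simp [mem_intBox, powerSums_eq_iff, and_assoc]

theorem J_succ_eq_card_filter (s k : ℕ) (X : ℝ) :
    J s (k + 1) X = #{p ∈ intBox s X ×ˢ intBox s X |
      powerSums k p.1 = powerSums k p.2 ∧ ∑ i, p.1 i ^ (k + 1) = ∑ i, p.2 i ^ (k + 1)} := by
  rw [J_eq_card_filter]
  exact congrArg card (filter_congr fun p _ => powerSums_succ_eq_iff)

theorem tarry_criterion_general (s k t : ℕ) (X : ℝ)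
    (h : t * J s (k + 1) X < J s k X) :
    ∃ x : Fin s → Fin t → ℤ,
      (∀ i l, 1 ≤ x i l ∧ (x i l : ℝ) ≤ X) ∧
      (∀ j ∈ Finset.Icc 1 k, ∀ l l' : Fin t, ∑ i, x i l ^ j = ∑ i, x i l' ^ j) ∧
      (∀ l l' : Fin t, l ≠ l' →
        ∑ i, x i l ^ (k + 1) ≠ ∑ i, x i l' ^ (k + 1)) := by
  let g : (Fin s → ℤ) → ℤ := fun x => ∑ i, x i ^ (k + 1)
  obtain ⟨x₀, -, hx₀⟩ : ∃ x ∈ intBox s X,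
      t < #({y ∈ intBox s X | powerSums k y = powerSums k x}.image g) := by
    by_contra! H
    have := card_filter_prod_le_mul_card_filter_prod _ _ g t H
    rw [← J_eq_card_filter, ← J_succ_eq_card_filter] at this
    omega
  obtain ⟨y, hy, hinj⟩ := exists_injective_comp_of_le_card_image _ g hx₀.le
  simp only [mem_filter, mem_intBox] at hy
  refine ⟨fun i l => y l i, fun i l => (hy l).1 i, fun j hj l l' => ?_,
    fun l l' hne => hinj.ne hne⟩
  exact powerSums_eq_iff.1 ((hy l).2.trans (hy l').2.symm) j hj

/-- If `J_{s,k}(X) > t · J_{s,k+1}(X)` then there exist positive integers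
`x_{il} ≤ X` whose `j`-th power sums agree for `1 ≤ j ≤ k` while their
`(k+1)`-st power sums are pairwise distinct. -/
theorem tarry_criterion (s k t : ℕ) (X : ℝ) (hX : 1 ≤ X)
    (h : t * J s (k + 1) X < J s k X) :
    ∃ x : Fin s → Fin t → ℤ,
      (∀ i l, 1 ≤ x i l ∧ (x i l : ℝ) ≤ X) ∧
      (∀ j ∈ Finset.Icc 1 k, ∀ l l' : Fin t, ∑ i, x i l ^ j = ∑ i, x i l' ^ j) ∧
      (∀ l l' : Fin t, l ≠ l' →
        ∑ i, x i l ^ (k + 1) ≠ ∑ i, x i l' ^ (k + 1)) :=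
  tarry_criterion_general s k t X h
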